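/- arXiv:1702.05467 — 2 statements merged into one kernel-verified Lean document; each statement's English description precedes it below -/
import Mathlib

section
/- Every squared-star with exactly 6 faces has signature {3,1,1,1}, {2,1,1,1,1}, or {2,2,2}; moreover, in the case {2,2,2} the number of doubled planes of adjacent type is 0 or 2 (never 1 or 3), and each of these possibilities is realized. -/
open scoped Classical
noncomputable section

/-- The vertex set `V = {±1, ±2, ±3, ±4} ⊆ ℤ`. -/
def Vset : Finset ℤ := {1, -1, 2, -2, 3, -3, 4, -4}

/-- An edge of the graph `G₈`: an unordered pair `{u, v}` of elements of `V`
with `|u| ≠ |v|`. -/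
def IsFace (e : Finset ℤ) : Prop :=
  ∃ u ∈ Vset, ∃ v ∈ Vset, |u| ≠ |v| ∧ e = {u, v}

/-- A squared-star: the edge set of a cycle in `G₈`, i.e. a set of at least 3
edges of `G₈` such that every incident vertex is incident to exactly two edges
and any two edges are connected by a chain of successively intersecting edges. -/
def SquaredStar (E : Finset (Finset ℤ)) : Prop :=
  3 ≤ E.card ∧
  (∀ e ∈ E, IsFace e) ∧
  (∀ v : ℤ, (∃ e ∈ E, v ∈ e) → (E.filter fun e => v ∈ e).card = 2) ∧
  ∀ e ∈ E, ∀ f ∈ E,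
    Relation.ReflTransGen (fun a b => a ∈ E ∧ b ∈ E ∧ (a ∩ b).Nonempty) e f

/-- The plane of an edge `{u, v}`: the unordered pair `{|u|, |v|}`. -/
def planeOf (e : Finset ℤ) : Finset ℤ := e.image fun x => |x|

/-- The number of faces of `E` lying in the plane `P`. -/
def planeCount (E : Finset (Finset ℤ)) (P : Finset ℤ) : ℕ :=
  (E.filter fun e => planeOf e = P).card

/-- The signature of a squared-star: the multiset of the numbers of faces in
each plane containing at least one face. -/
def signatureOf (E : Finset (Finset ℤ)) : Multiset ℕ :=
  (E.image planeOf).val.map fun P => planeCount E P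

/-- A plane containing exactly two faces of `E` is of adjacent type if those
two faces share a vertex. -/
def AdjacentType (E : Finset (Finset ℤ)) (P : Finset ℤ) : Prop :=
  planeCount E P = 2 ∧
  ∃ e ∈ E, ∃ f ∈ E, e ≠ f ∧ planeOf e = P ∧ planeOf f = P ∧ (e ∩ f).Nonempty

/-- The number of doubled planes of `E` of adjacent type. -/
def adjDoubledCount (E : Finset (Finset ℤ)) : ℕ :=
  ((E.image planeOf).filter fun P => AdjacentType E P).card

/-- An element of the hyperoctahedral group: a bijection of `V` commuting with
the antipodal map. -/
def IsHyperOct (g : ℤ → ℤ) : Prop :=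
  Set.BijOn g ↑Vset ↑Vset ∧ ∀ v ∈ Vset, g (-v) = -g v

/-- The action of a signed permutation on a set of faces. -/
def actStar (g : ℤ → ℤ) (E : Finset (Finset ℤ)) : Finset (Finset ℤ) :=
  E.image fun e => e.image g

/-- Two squared-stars are equivalent if a signed permutation carries one to the
other. -/
def StarEquiv (E F : Finset (Finset ℤ)) : Prop :=
  ∃ g : ℤ → ℤ, IsHyperOct g ∧ F = actStar g E

/-!
Write `d v` for the number of faces at a vertex `v` (always `0` or `2`) and `n P` for the number
of faces in a plane `P`. A face in a plane through `i` has exactly one endpoint in `{i, -i}`, so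
`d i + d (-i) = ∑_{P ∋ i} n P ∈ {0, 2, 4}`; together with `∑ n P = 6` and the bound of `n {i, j}`
by the product of the numbers of used vertices over `i` and over `j`, this leaves only count
vectors with the three signatures.

When the signature is `{2, 2, 2}`, a plane is of adjacent type exactly when one vertex carries both
of its faces, so the adjacent planes correspond to the vertices whose two faces are coplanar. If the
two faces at `v` lie in different planes, the plane of one of them has a single face at `v` and
hence a single face at `-v`, so `-v` is not coplanar either. The non-coplanar vertices therefore
come in antipodal pairs among the six used vertices, and the number of adjacent planes is even and
at most three.
-/

open Finset

def faceDeg (E : Finset (Finset ℤ)) (v : ℤ) : ℕ := #{e ∈ E | v ∈ e}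

def planeFaces (E : Finset (Finset ℤ)) (P : Finset ℤ) : Finset (Finset ℤ) :=
  {e ∈ E | planeOf e = P}

def allPlanes : Finset (Finset ℤ) := {{1, 2}, {1, 3}, {1, 4}, {2, 3}, {2, 4}, {3, 4}}

structure IsTwoRegular (E : Finset (Finset ℤ)) : Prop where
  isFace : ∀ e ∈ E, IsFace e
  faceDeg_eq_two : ∀ v, (∃ e ∈ E, v ∈ e) → faceDeg E v = 2

lemma SquaredStar.isTwoRegular {E : Finset (Finset ℤ)} (h : SquaredStar E) : IsTwoRegular E :=
  ⟨h.2.1, h.2.2.1⟩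

section Faces

variable {e : Finset ℤ}

lemma IsFace.subset_Vset (he : IsFace e) : e ⊆ Vset := by
  obtain ⟨u, hu, v, hv, -, rfl⟩ := he
  simp [insert_subset_iff, hu, hv]

lemma IsFace.card_eq_two (he : IsFace e) : #e = 2 := by
  obtain ⟨u, -, v, -, huv, rfl⟩ := he
  exact card_pair fun h => huv (h ▸ rfl)

lemma IsFace.neg_notMem (he : IsFace e) {v : ℤ} (hv : v ∈ e) : -v ∉ e := by
  have hv0 : v ≠ 0 := fun h => absurd (h ▸ he.subset_Vset hv) (by decide)
  obtain ⟨a, -, b, -, hab, rfl⟩ := he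
  simp only [mem_insert, mem_singleton] at hv ⊢
  rintro (rfl | rfl) <;> rcases hv with h | h <;> first | omega | simp_all

lemma IsFace.planeOf_mem_allPlanes (he : IsFace e) : planeOf e ∈ allPlanes := by
  obtain ⟨u, hu, v, hv, huv, rfl⟩ := he
  have key : ∀ u ∈ Vset, ∀ v ∈ Vset, |u| ≠ |v| → ({|u|, |v|} : Finset ℤ) ∈ allPlanes := by
    decide
  simpa [planeOf, image_insert] using key u hu v hv huv

lemma abs_mem_planeOf_iff {v : ℤ} : |v| ∈ planeOf e ↔ v ∈ e ∨ -v ∈ e := by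
  simp only [planeOf, mem_image, abs_eq_abs]
  constructor
  · rintro ⟨x, hx, rfl | rfl⟩
    · exact .inl hx
    · exact .inr hx
  · rintro (hv | hv)
    · exact ⟨v, hv, .inl rfl⟩
    · exact ⟨-v, hv, .inr rfl⟩

end Faces

section Counting

variable {E : Finset (Finset ℤ)}

lemma faceDeg_add_faceDeg_neg (hE : ∀ e ∈ E, IsFace e) (v : ℤ) :
    faceDeg E v + faceDeg E (-v) = #{e ∈ E | |v| ∈ planeOf e} := by
  rw [faceDeg, faceDeg, ← card_union_of_disjoint, ← filter_or]
  · simp_rw [abs_mem_planeOf_iff]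
  · exact disjoint_filter.2 fun e he hv => (hE e he).neg_notMem hv

lemma card_eq_sum_planeCount (hE : ∀ e ∈ E, IsFace e) :
    #E = planeCount E {1, 2} + planeCount E {1, 3} + planeCount E {1, 4} +
      planeCount E {2, 3} + planeCount E {2, 4} + planeCount E {3, 4} := by
  rw [card_eq_sum_card_fiberwise fun e he => (hE e he).planeOf_mem_allPlanes]
  simp +decide [allPlanes, sum_insert, planeCount, add_assoc]

lemma card_filter_mem_planeOf (hE : ∀ e ∈ E, IsFace e) (i : ℤ) :
    #{e ∈ E | i ∈ planeOf e} = ∑ P ∈ allPlanes with i ∈ P, planeCount E P := by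
  rw [card_eq_sum_card_fiberwise (f := planeOf) (t := {P ∈ allPlanes | i ∈ P})]
  · refine sum_congr rfl fun P hP => ?_
    rw [filter_filter, planeCount]
    exact congrArg card
      (filter_congr fun e _ => and_iff_right_of_imp fun h => h ▸ (mem_filter.1 hP).2)
  · intro e he
    obtain ⟨he, hi⟩ := mem_filter.1 (mem_coe.1 he)
    exact mem_filter.2 ⟨(hE e he).planeOf_mem_allPlanes, hi⟩

lemma faceDeg_add_faceDeg_neg_eq_sum (hE : ∀ e ∈ E, IsFace e) {i : ℤ} (hi : 0 ≤ i) :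
    faceDeg E i + faceDeg E (-i) = ∑ P ∈ allPlanes with i ∈ P, planeCount E P := by
  rw [faceDeg_add_faceDeg_neg hE, abs_of_nonneg hi, card_filter_mem_planeOf hE]

lemma fiber_equations (hE : ∀ e ∈ E, IsFace e) :
    faceDeg E 1 + faceDeg E (-1) =
      planeCount E {1, 2} + planeCount E {1, 3} + planeCount E {1, 4} ∧
    faceDeg E 2 + faceDeg E (-2) =
      planeCount E {1, 2} + planeCount E {2, 3} + planeCount E {2, 4} ∧
    faceDeg E 3 + faceDeg E (-3) =
      planeCount E {1, 3} + planeCount E {2, 3} + planeCount E {3, 4} ∧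
    faceDeg E 4 + faceDeg E (-4) =
      planeCount E {1, 4} + planeCount E {2, 4} + planeCount E {3, 4} := by
  refine ⟨?_, ?_, ?_, ?_⟩ <;> rw [faceDeg_add_faceDeg_neg_eq_sum hE (by norm_num)] <;>
    simp +decide [allPlanes, filter_insert, filter_singleton, sum_insert, add_assoc]

lemma planeCount_pair_le (hE : ∀ e ∈ E, IsFace e) {i j : ℤ} (hi : 0 ≤ i) (hj : 0 ≤ j) :
    planeCount E {i, j} ≤
      #{v ∈ {i, -i} | faceDeg E v ≠ 0} * #{v ∈ {j, -j} | faceDeg E v ≠ 0} := by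
  have hfib : ∀ {k u : ℤ}, 0 ≤ k → |u| = k → u ∈ ({k, -k} : Finset ℤ) := fun hk h => by
    simpa using (abs_eq hk).1 h
  have hused : ∀ {u e}, e ∈ E → u ∈ e → faceDeg E u ≠ 0 := fun he hu =>
    card_ne_zero.2 ⟨_, mem_filter.2 ⟨he, hu⟩⟩
  rw [← card_product]
  refine (card_le_card fun e he => ?_).trans (card_image_le (f := fun p => ({p.1, p.2} : Finset ℤ)))
  obtain ⟨he, hP⟩ := mem_filter.1 he
  obtain ⟨u, -, v, -, -, rfl⟩ := hE _ he
  have hu : |u| = i ∧ |v| = j ∨ |u| = j ∧ |v| = i := by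
    rwa [planeOf, image_insert, image_singleton, ← coe_inj, coe_pair, coe_pair,
      Set.pair_eq_pair_iff] at hP
  simp only [mem_image, mem_product, mem_filter, Prod.exists]
  rcases hu with ⟨hu, hv⟩ | ⟨hu, hv⟩
  · exact ⟨u, v, ⟨⟨hfib hi hu, hused he (by simp)⟩, hfib hj hv, hused he (by simp)⟩, rfl⟩
  · exact ⟨v, u, ⟨⟨hfib hi hv, hused he (by simp)⟩, hfib hj hu, hused he (by simp)⟩, pair_comm _ _⟩

lemma image_planeOf_eq_filter (hE : ∀ e ∈ E, IsFace e) :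
    E.image planeOf = {P ∈ allPlanes | planeCount E P ≠ 0} := by
  ext P
  simp only [mem_image, mem_filter, planeCount, ne_eq, card_eq_zero, ← nonempty_iff_ne_empty,
    filter_nonempty_iff]
  constructor
  · rintro ⟨e, he, rfl⟩
    exact ⟨(hE e he).planeOf_mem_allPlanes, e, he, rfl⟩
  · rintro ⟨-, h⟩
    exact h

lemma signatureOf_eq_filter (hE : ∀ e ∈ E, IsFace e) :
    signatureOf E = Multiset.filter (· ≠ 0) {planeCount E {1, 2}, planeCount E {1, 3},
      planeCount E {1, 4}, planeCount E {2, 3}, planeCount E {2, 4}, planeCount E {3, 4}} := by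
  have hval : allPlanes.val = {{1, 2}, {1, 3}, {1, 4}, {2, 3}, {2, 4}, {3, 4}} := by decide
  rw [signatureOf, image_planeOf_eq_filter hE, filter_val, hval]
  exact (Multiset.filter_map (· ≠ 0) (planeCount E) _).symm

end Counting

lemma card_inter_le_one_of_card_eq_two {α : Type*} [DecidableEq α] {e f : Finset α}
    (he : #e = 2) (hf : #f = 2) (hef : e ≠ f) : #(e ∩ f) ≤ 1 := by
  by_contra! h
  have h₁ := eq_of_subset_of_card_le inter_subset_left (by omega : #e ≤ #(e ∩ f))
  have h₂ := eq_of_subset_of_card_le inter_subset_right (by omega : #f ≤ #(e ∩ f))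
  exact hef (h₁.symm.trans h₂)

lemma even_card_of_neg_mem {S : Finset ℤ} (h0 : 0 ∉ S) (hneg : ∀ v ∈ S, -v ∈ S) : Even #S := by
  have h : ∑ _v ∈ S, (1 : ZMod 2) = 0 :=
    sum_involution (fun v _ => -v) (fun _ _ => by decide) (fun v hv _ => by grind) hneg
      (fun v _ => neg_neg v)
  simpa [ZMod.natCast_eq_zero_iff_even] using h

def IsCoplanarAt (E : Finset (Finset ℤ)) (v : ℤ) : Prop :=
  ∃ P ∈ E.image planeOf, faceDeg (planeFaces E P) v = 2

section Adjacency

variable {E : Finset (Finset ℤ)}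

lemma faceDeg_planeFaces_le (P : Finset ℤ) (v : ℤ) : faceDeg (planeFaces E P) v ≤ faceDeg E v :=
  card_le_card (filter_subset_filter _ (filter_subset _ _))

lemma faceDeg_planeFaces_add_le {P Q : Finset ℤ} (hPQ : P ≠ Q) (v : ℤ) :
    faceDeg (planeFaces E P) v + faceDeg (planeFaces E Q) v ≤ faceDeg E v := by
  rw [faceDeg, faceDeg, ← card_union_of_disjoint]
  · refine card_le_card (union_subset ?_ ?_) <;>
      exact filter_subset_filter _ (filter_subset _ _)
  · exact disjoint_filter_filter (disjoint_filter.2 fun e _ hP hQ => hPQ (hP.symm.trans hQ))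

lemma planeCount_eq_faceDeg_add_faceDeg_neg (hE : ∀ e ∈ E, IsFace e) {P : Finset ℤ} {v : ℤ}
    (hv : |v| ∈ P) :
    planeCount E P = faceDeg (planeFaces E P) v + faceDeg (planeFaces E P) (-v) := by
  rw [faceDeg_add_faceDeg_neg (E := planeFaces E P) fun e he => hE e (mem_filter.1 he).1,
    planeCount, planeFaces, filter_filter]
  exact congrArg card (filter_congr fun e _ => (and_iff_left_of_imp fun h => h ▸ hv).symm)

lemma sum_faceDeg_Vset (hE : ∀ e ∈ E, IsFace e) : ∑ v ∈ Vset, faceDeg E v = 2 * #E := by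
  have h := sum_card_bipartiteAbove_eq_sum_card_bipartiteBelow (fun v e => v ∈ e) (s := Vset)
    (t := E)
  simp only [bipartiteAbove, bipartiteBelow, filter_mem_eq_inter] at h
  calc ∑ v ∈ Vset, faceDeg E v = ∑ e ∈ E, #(Vset ∩ e) := h
    _ = ∑ _e ∈ E, 2 := sum_congr rfl fun e he => by
      rw [inter_eq_right.2 (hE e he).subset_Vset, (hE e he).card_eq_two]
    _ = 2 * #E := by rw [sum_const, smul_eq_mul, mul_comm]

lemma adjacentType_iff_nonempty_inter {P e f : Finset ℤ} (h2 : planeCount E P = 2)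
    (hPF : planeFaces E P = {e, f}) (hef : e ≠ f) : AdjacentType E P ↔ (e ∩ f).Nonempty := by
  have hmem : ∀ {g}, g ∈ E ∧ planeOf g = P ↔ g = e ∨ g = f := fun {g} => by
    simpa [planeFaces] using Finset.ext_iff.1 hPF g
  constructor
  · rintro ⟨-, a, ha, b, hb, hab, haP, hbP, hne⟩
    rcases hmem.1 ⟨ha, haP⟩ with rfl | rfl <;> rcases hmem.1 ⟨hb, hbP⟩ with rfl | rfl
    · exact absurd rfl hab
    · exact hne
    · rwa [inter_comm]
    · exact absurd rfl hab
  · intro h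
    obtain ⟨he, heP⟩ := hmem.2 (.inl rfl)
    obtain ⟨hf, hfP⟩ := hmem.2 (.inr rfl)
    exact ⟨h2, e, he, f, hf, hef, heP, hfP, h⟩

lemma card_filter_faceDeg_planeFaces_eq_two (hE : ∀ e ∈ E, IsFace e) {P : Finset ℤ}
    (h2 : planeCount E P = 2) :
    #{v ∈ Vset | faceDeg (planeFaces E P) v = 2} = if AdjacentType E P then 1 else 0 := by
  have h2' : #(planeFaces E P) = 2 := h2
  obtain ⟨e, f, hef, hPF⟩ := card_eq_two.1 h2'
  have he : IsFace e := hE e (mem_filter.1 (hPF ▸ mem_insert_self e {f})).1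
  have hf : IsFace f := hE f (mem_filter.1 (hPF ▸ mem_insert_of_mem (mem_singleton_self f))).1
  have hset : ({v ∈ Vset | faceDeg (planeFaces E P) v = 2} : Finset ℤ) = e ∩ f := by
    ext v
    rw [mem_filter, faceDeg, ← h2', card_filter_eq_iff, hPF, mem_inter]
    simp only [mem_insert, mem_singleton, forall_eq_or_imp, forall_eq]
    exact ⟨And.right, fun h => ⟨he.subset_Vset h.1, h⟩⟩
  rw [hset, adjacentType_iff_nonempty_inter h2 hPF hef]
  split_ifs with h
  · exact le_antisymm (card_inter_le_one_of_card_eq_two he.card_eq_two hf.card_eq_two hef)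
      (card_pos.2 h)
  · exact card_eq_zero.2 (not_nonempty_iff_eq_empty.1 h)

lemma card_filter_faceDeg_planeFaces_le_one (S : Finset (Finset ℤ)) {v : ℤ}
    (hv : faceDeg E v ≤ 2) : #{P ∈ S | faceDeg (planeFaces E P) v = 2} ≤ 1 := by
  refine card_le_one.2 fun P hP Q hQ => by_contra fun hPQ => ?_
  have := faceDeg_planeFaces_add_le (E := E) hPQ v
  rw [mem_filter] at hP hQ
  omega

end Adjacency

lemma filter_ne_zero_cases_of_fiber_equations {n₁₂ n₁₃ n₁₄ n₂₃ n₂₄ n₃₄ d₁ d₂ d₃ d₄ : ℕ}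
    (h₁ : n₁₂ + n₁₃ + n₁₄ = d₁) (h₂ : n₁₂ + n₂₃ + n₂₄ = d₂)
    (h₃ : n₁₃ + n₂₃ + n₃₄ = d₃) (h₄ : n₁₄ + n₂₄ + n₃₄ = d₄)
    (hd₁ : d₁ ∈ ({0, 2, 4} : Finset ℕ)) (hd₂ : d₂ ∈ ({0, 2, 4} : Finset ℕ))
    (hd₃ : d₃ ∈ ({0, 2, 4} : Finset ℕ)) (hd₄ : d₄ ∈ ({0, 2, 4} : Finset ℕ))
    (hsum : n₁₂ + n₁₃ + n₁₄ + n₂₃ + n₂₄ + n₃₄ = 6)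
    (b₁₂ : 4 * n₁₂ ≤ d₁ * d₂) (b₁₃ : 4 * n₁₃ ≤ d₁ * d₃) (b₁₄ : 4 * n₁₄ ≤ d₁ * d₄)
    (b₂₃ : 4 * n₂₃ ≤ d₂ * d₃) (b₂₄ : 4 * n₂₄ ≤ d₂ * d₄) (b₃₄ : 4 * n₃₄ ≤ d₃ * d₄) :
    Multiset.filter (· ≠ 0) {n₁₂, n₁₃, n₁₄, n₂₃, n₂₄, n₃₄} = {3, 1, 1, 1} ∨
      Multiset.filter (· ≠ 0) {n₁₂, n₁₃, n₁₄, n₂₃, n₂₄, n₃₄} = {2, 1, 1, 1, 1} ∨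
      Multiset.filter (· ≠ 0) {n₁₂, n₁₃, n₁₄, n₂₃, n₂₄, n₃₄} = {2, 2, 2} := by
  subst h₁ h₂ h₃ h₄
  have hle : ∀ d ∈ ({0, 2, 4} : Finset ℕ), d < 5 := by decide
  have key : ∀ a ∈ range 5, ∀ b ∈ range 5, ∀ c ∈ range 5, ∀ d ∈ range 5, ∀ e ∈ range 5,
      ∀ f ∈ range 5,
      a + b + c ∈ ({0, 2, 4} : Finset ℕ) → a + d + e ∈ ({0, 2, 4} : Finset ℕ) →
      b + d + f ∈ ({0, 2, 4} : Finset ℕ) → c + e + f ∈ ({0, 2, 4} : Finset ℕ) →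
      a + b + c + d + e + f = 6 →
      4 * a ≤ (a + b + c) * (a + d + e) → 4 * b ≤ (a + b + c) * (b + d + f) →
      4 * c ≤ (a + b + c) * (c + e + f) → 4 * d ≤ (a + d + e) * (b + d + f) →
      4 * e ≤ (a + d + e) * (c + e + f) → 4 * f ≤ (b + d + f) * (c + e + f) →
      Multiset.filter (· ≠ 0) {a, b, c, d, e, f} = {3, 1, 1, 1} ∨
        Multiset.filter (· ≠ 0) {a, b, c, d, e, f} = {2, 1, 1, 1, 1} ∨
        Multiset.filter (· ≠ 0) {a, b, c, d, e, f} = {2, 2, 2} := by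
    decide +kernel
  have h₁ := hle _ hd₁; have h₂ := hle _ hd₂; have h₃ := hle _ hd₃; have h₄ := hle _ hd₄
  exact key _ (mem_range.2 (by omega)) _ (mem_range.2 (by omega)) _ (mem_range.2 (by omega))
    _ (mem_range.2 (by omega)) _ (mem_range.2 (by omega)) _ (mem_range.2 (by omega))
    hd₁ hd₂ hd₃ hd₄ hsum b₁₂ b₁₃ b₁₄ b₂₃ b₂₄ b₃₄

namespace IsTwoRegular

variable {E : Finset (Finset ℤ)}

lemma faceDeg_eq_zero_or_two (hE : IsTwoRegular E) (v : ℤ) : faceDeg E v = 0 ∨ faceDeg E v = 2 := by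
  by_cases h : ∃ e ∈ E, v ∈ e
  · exact .inr (hE.faceDeg_eq_two v h)
  · exact .inl (card_eq_zero.2 (filter_eq_empty_iff.2 fun e he hv => h ⟨e, he, hv⟩))

lemma faceDeg_add_faceDeg_neg_eq_two_mul (hE : IsTwoRegular E) {i : ℤ} (hi : i ≠ 0) :
    faceDeg E i + faceDeg E (-i) = 2 * #{v ∈ {i, -i} | faceDeg E v ≠ 0} := by
  rw [card_filter, sum_pair (by omega : i ≠ -i)]
  rcases hE.faceDeg_eq_zero_or_two i with h | h <;>
    rcases hE.faceDeg_eq_zero_or_two (-i) with h' | h' <;> simp [h, h']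

lemma faceDeg_add_faceDeg_neg_mem (hE : IsTwoRegular E) {i : ℤ} (hi : i ≠ 0) :
    faceDeg E i + faceDeg E (-i) ∈ ({0, 2, 4} : Finset ℕ) := by
  have : #{v ∈ {i, -i} | faceDeg E v ≠ 0} ≤ 2 := (card_filter_le _ _).trans card_le_two
  rw [hE.faceDeg_add_faceDeg_neg_eq_two_mul hi]
  interval_cases #{v ∈ {i, -i} | faceDeg E v ≠ 0} <;> decide

lemma four_mul_planeCount_le (hE : IsTwoRegular E) {i j : ℤ} (hi : 0 < i) (hj : 0 < j) :
    4 * planeCount E {i, j} ≤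
      (faceDeg E i + faceDeg E (-i)) * (faceDeg E j + faceDeg E (-j)) := by
  rw [hE.faceDeg_add_faceDeg_neg_eq_two_mul hi.ne', hE.faceDeg_add_faceDeg_neg_eq_two_mul hj.ne']
  have := planeCount_pair_le hE.isFace hi.le hj.le
  nlinarith

theorem signatureOf_cases (hE : IsTwoRegular E) (h6 : #E = 6) :
    signatureOf E = {3, 1, 1, 1} ∨ signatureOf E = {2, 1, 1, 1, 1} ∨
      signatureOf E = {2, 2, 2} := by
  obtain ⟨h₁, h₂, h₃, h₄⟩ := fiber_equations hE.isFace
  rw [signatureOf_eq_filter hE.isFace]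
  refine filter_ne_zero_cases_of_fiber_equations h₁.symm h₂.symm h₃.symm h₄.symm ?_ ?_ ?_ ?_
    (h6 ▸ card_eq_sum_planeCount hE.isFace).symm ?_ ?_ ?_ ?_ ?_ ?_
  all_goals first
    | exact hE.faceDeg_add_faceDeg_neg_mem (by norm_num)
    | exact hE.four_mul_planeCount_le (by norm_num) (by norm_num)

lemma faceDeg_le_two (hE : IsTwoRegular E) (v : ℤ) : faceDeg E v ≤ 2 := by
  rcases hE.faceDeg_eq_zero_or_two v with h | h <;> omega

lemma card_filter_faceDeg_eq_two (hE : IsTwoRegular E) : #{v ∈ Vset | faceDeg E v = 2} = #E := by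
  have h := sum_faceDeg_Vset hE.isFace
  rw [← sum_filter_of_ne (p := fun v => faceDeg E v = 2) fun v _ hv =>
    (hE.faceDeg_eq_zero_or_two v).resolve_left hv] at h
  rw [sum_congr rfl fun v hv => (mem_filter.1 hv).2, sum_const, smul_eq_mul] at h
  omega

lemma faceDeg_eq_two_of_isCoplanarAt (hE : IsTwoRegular E) {v : ℤ} (h : IsCoplanarAt E v) :
    faceDeg E v = 2 := by
  obtain ⟨P, -, hP⟩ := h
  have := faceDeg_planeFaces_le (E := E) P v
  have := hE.faceDeg_le_two v
  omega

lemma adjDoubledCount_eq_card_isCoplanarAt (hE : IsTwoRegular E)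
    (hP : ∀ P ∈ E.image planeOf, planeCount E P = 2) :
    adjDoubledCount E = #{v ∈ Vset | IsCoplanarAt E v} := by
  calc adjDoubledCount E
      = ∑ P ∈ E.image planeOf, #{v ∈ Vset | faceDeg (planeFaces E P) v = 2} := by
        rw [adjDoubledCount, card_filter]
        exact sum_congr rfl fun P hP' =>
          (card_filter_faceDeg_planeFaces_eq_two hE.isFace (hP P hP')).symm
    _ = ∑ v ∈ Vset, #{P ∈ E.image planeOf | faceDeg (planeFaces E P) v = 2} :=
        sum_card_bipartiteAbove_eq_sum_card_bipartiteBelow _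
    _ = #{v ∈ Vset | IsCoplanarAt E v} := by
        rw [card_filter]
        refine sum_congr rfl fun v _ => ?_
        split_ifs with h
        · exact le_antisymm (card_filter_faceDeg_planeFaces_le_one _ (hE.faceDeg_le_two v))
            (card_pos.2 (filter_nonempty_iff.2 h))
        · exact card_eq_zero.2 (filter_eq_empty_iff.2 fun P hP' hP2 => h ⟨P, hP', hP2⟩)

lemma not_isCoplanarAt_neg (hE : IsTwoRegular E)
    (hP : ∀ P ∈ E.image planeOf, planeCount E P = 2) {v : ℤ} (hv : faceDeg E v = 2)
    (hnc : ¬IsCoplanarAt E v) : faceDeg E (-v) = 2 ∧ ¬IsCoplanarAt E (-v) := by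
  obtain ⟨e, he⟩ := card_pos.1 (by omega : 0 < faceDeg E v)
  obtain ⟨heE, hve⟩ := mem_filter.1 he
  have hPim : planeOf e ∈ E.image planeOf := mem_image_of_mem _ heE
  have hsplit := planeCount_eq_faceDeg_add_faceDeg_neg hE.isFace
    (abs_mem_planeOf_iff.2 (.inl hve))
  rw [hP _ hPim] at hsplit
  have hpos : 0 < faceDeg (planeFaces E (planeOf e)) v :=
    card_pos.2 ⟨e, mem_filter.2 ⟨mem_filter.2 ⟨heE, rfl⟩, hve⟩⟩
  have hne : faceDeg (planeFaces E (planeOf e)) v ≠ 2 := fun h => hnc ⟨_, hPim, h⟩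
  have hle := faceDeg_planeFaces_le (E := E) (planeOf e) v
  have hle' := faceDeg_planeFaces_le (E := E) (planeOf e) (-v)
  have hdeg : faceDeg E (-v) = 2 := by
    rcases hE.faceDeg_eq_zero_or_two (-v) with h | h <;> omega
  refine ⟨hdeg, ?_⟩
  rintro ⟨Q, -, hQ⟩
  have hPQ : planeOf e ≠ Q := by rintro rfl; omega
  have := faceDeg_planeFaces_add_le (E := E) hPQ (-v)
  omega

theorem adjDoubledCount_eq_zero_or_two (hE : IsTwoRegular E) (h6 : #E = 6)
    (hsig : signatureOf E = {2, 2, 2}) : adjDoubledCount E = 0 ∨ adjDoubledCount E = 2 := by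
  have hP : ∀ P ∈ E.image planeOf, planeCount E P = 2 := fun P hP => by
    have := Multiset.mem_map_of_mem (planeCount E) hP
    rw [← signatureOf, hsig] at this
    simpa using this
  have hplanes : #(E.image planeOf) = 3 := by
    have := congrArg Multiset.card hsig
    rwa [signatureOf, Multiset.card_map] at this
  have hadj_le : adjDoubledCount E ≤ 3 := hplanes ▸ card_filter_le _ _
  have hused := hE.card_filter_faceDeg_eq_two
  rw [← card_filter_add_card_filter_not (fun v => IsCoplanarAt E v), filter_filter, filter_filter,
    h6] at hused
  have hcop : ({v ∈ Vset | faceDeg E v = 2 ∧ IsCoplanarAt E v} : Finset ℤ) =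
      {v ∈ Vset | IsCoplanarAt E v} :=
    filter_congr fun v _ => and_iff_right_of_imp (hE.faceDeg_eq_two_of_isCoplanarAt)
  have heven : Even #{v ∈ Vset | faceDeg E v = 2 ∧ ¬IsCoplanarAt E v} := by
    refine even_card_of_neg_mem (fun h => absurd (mem_filter.1 h).1 (by decide)) fun v hv => ?_
    obtain ⟨hV, hv2, hnc⟩ := mem_filter.1 hv
    exact mem_filter.2
      ⟨(by decide : ∀ v ∈ Vset, -v ∈ Vset) v hV, hE.not_isCoplanarAt_neg hP hv2 hnc⟩
  rw [hcop, ← hE.adjDoubledCount_eq_card_isCoplanarAt hP] at hused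
  obtain ⟨k, hk⟩ := heven
  omega

end IsTwoRegular

instance (E : Finset (Finset ℤ)) : DecidablePred (AdjacentType E) := fun _ =>
  inferInstanceAs (Decidable (_ ∧ _))

def cycleFaces (l : List ℤ) : List (Finset ℤ) :=
  List.zipWith (fun a b => {a, b}) l (l.rotate 1)

lemma squaredStar_of_isChain (L : List (Finset ℤ)) (hcard : 3 ≤ #L.toFinset)
    (hface : ∀ e ∈ L, IsFace e) (hdeg : ∀ e ∈ L, ∀ v ∈ e, faceDeg L.toFinset v = 2)
    (hchain : L.IsChain fun a b => a ∈ L.toFinset ∧ b ∈ L.toFinset ∧ (a ∩ b).Nonempty) :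
    SquaredStar L.toFinset := by
  set R := fun a b : Finset ℤ => a ∈ L.toFinset ∧ b ∈ L.toFinset ∧ (a ∩ b).Nonempty
  have : Std.Symm R := ⟨fun a b ⟨ha, hb, h⟩ => ⟨hb, ha, inter_comm a b ▸ h⟩⟩
  have hne : L ≠ [] := by rintro rfl; simp at hcard
  have hroot : ∀ e ∈ L, Relation.ReflTransGen R (L.head hne) e :=
    List.IsChain.induction _ L hchain (fun _ _ hxy hx => hx.tail hxy) fun _ => .refl
  refine ⟨hcard, fun e he => hface e (List.mem_toFinset.1 he),
    fun v ⟨e, he, hv⟩ => hdeg e (List.mem_toFinset.1 he) v hv, fun e he f hf => ?_⟩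
  rw [List.mem_toFinset] at he hf
  exact (Std.Symm.symm _ _ (hroot e he)).trans (hroot f hf)

/-- A squared-star with exactly 6 faces has signature `{3,1,1,1}`,
`{2,1,1,1,1}` or `{2,2,2}`; in the last case the number of doubled planes of
adjacent type is 0 or 2, and all these possibilities are realized. -/
theorem signature_six_faces :
    (∀ E : Finset (Finset ℤ), SquaredStar E → E.card = 6 →
      (signatureOf E = {3, 1, 1, 1} ∨ signatureOf E = {2, 1, 1, 1, 1} ∨
        signatureOf E = {2, 2, 2}) ∧
      (signatureOf E = {2, 2, 2} →
        adjDoubledCount E = 0 ∨ adjDoubledCount E = 2)) ∧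
    (∃ E : Finset (Finset ℤ), SquaredStar E ∧ E.card = 6 ∧
      signatureOf E = {3, 1, 1, 1}) ∧
    (∃ E : Finset (Finset ℤ), SquaredStar E ∧ E.card = 6 ∧
      signatureOf E = {2, 1, 1, 1, 1}) ∧
    (∃ E : Finset (Finset ℤ), SquaredStar E ∧ E.card = 6 ∧
      signatureOf E = {2, 2, 2} ∧ adjDoubledCount E = 0) ∧
    (∃ E : Finset (Finset ℤ), SquaredStar E ∧ E.card = 6 ∧
      signatureOf E = {2, 2, 2} ∧ adjDoubledCount E = 2) := by
  refine ⟨fun E hE h6 => ⟨hE.isTwoRegular.signatureOf_cases h6,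
      hE.isTwoRegular.adjDoubledCount_eq_zero_or_two h6⟩,
    ⟨(cycleFaces [1, 2, -1, -2, 3, 4]).toFinset, ?_, by decide, by decide⟩,
    ⟨(cycleFaces [1, 2, 3, 4, -1, -3]).toFinset, ?_, by decide, by decide⟩,
    ⟨(cycleFaces [1, 2, 3, -1, -2, -3]).toFinset, ?_, by decide, by decide, ?_⟩,
    ⟨(cycleFaces [1, 2, -1, 3, 4, -3]).toFinset, ?_, by decide, by decide, ?_⟩⟩
  -- Instance search does not see through `IsFace`, and `adjDoubledCount` was elaborated with a
  -- classical instance for `AdjacentType`; unfolding the one and rewriting the other lets `decide`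
  -- run.
  all_goals first
    | exact squaredStar_of_isChain _ (by decide) (by unfold IsFace; decide) (by decide) (by decide)
    | (rw [adjDoubledCount, filter_congr_decidable]; decide)
end
end

section
/- Every squared-star with exactly 8 faces has signature {3,3,1,1}, {2,2,1,1,1,1}, or {2,2,2,2}, and each of these three signatures is realized by some squared-star with exactly 8 faces. -/
open scoped Classical
noncomputable section

/-!
Every vertex of `V` lies on at most two faces, while 8 faces have 16 endpoints, so every vertex
lies on exactly two. The four faces meeting `±i` therefore distribute over the three planes
through `i`: writing `m P` for the number of faces in the plane `P`,
`m {i,j} + m {i,k} + m {i,l} = 4`.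
These four equations force opposite planes to carry equal counts `a, b, c` with `a + b + c = 4`.
Faces in opposite planes share no vertex, so connectivity forbids two of `a, b, c` to vanish,
leaving `(3,1,0)`, `(2,1,1)` and `(2,2,0)`. Each case is realized by an explicit 8-cycle.
-/

def sixPlanes : Finset (Finset ℤ) := {{1, 2}, {1, 3}, {1, 4}, {2, 3}, {2, 4}, {3, 4}}

instance : DecidablePred IsFace := fun e =>
  inferInstanceAs (Decidable (∃ u ∈ Vset, ∃ v ∈ Vset, |u| ≠ |v| ∧ e = {u, v}))

lemma mem_planeOf_iff {e : Finset ℤ} {i : ℤ} (hi : 0 ≤ i) : i ∈ planeOf e ↔ i ∈ e ∨ -i ∈ e := by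
  simp only [planeOf, Finset.mem_image, abs_eq hi]
  constructor
  · rintro ⟨x, hx, rfl | rfl⟩ <;> simp_all
  · rintro (h | h)
    · exact ⟨i, h, Or.inl rfl⟩
    · exact ⟨-i, h, Or.inr rfl⟩

namespace IsFace

variable {e : Finset ℤ} (he : IsFace e)
include he

lemma subset_Vset_s11 : e ⊆ Vset := by
  obtain ⟨u, hu, v, hv, -, rfl⟩ := he
  simp [Finset.insert_subset_iff, hu, hv]

lemma card_eq_two_s11 : e.card = 2 := by
  obtain ⟨u, -, v, -, huv, rfl⟩ := he
  exact Finset.card_pair fun h => huv (congrArg abs h)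

lemma injOn_abs : Set.InjOn abs (e : Set ℤ) := by
  obtain ⟨u, -, v, -, huv, rfl⟩ := he
  intro x hx y hy hxy
  simp only [Finset.coe_insert, Finset.coe_singleton, Set.mem_insert_iff,
    Set.mem_singleton_iff] at hx hy
  rcases hx with rfl | rfl <;> rcases hy with rfl | rfl <;> simp_all [eq_comm]

lemma neg_notMem_s11 {i : ℤ} (hi : i ≠ 0) (h : i ∈ e) : -i ∉ e := by
  intro h'
  have := he.injOn_abs h h' (abs_neg i).symm
  omega

lemma planeOf_mem_sixPlanes : planeOf e ∈ sixPlanes := by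
  obtain ⟨u, hu, v, hv, huv, rfl⟩ := he
  fin_cases hu <;> fin_cases hv <;> revert huv <;> decide

end IsFace

section Counting

variable {E : Finset (Finset ℤ)}

lemma card_filter_mem_le_two
    (hdeg : ∀ v : ℤ, (∃ e ∈ E, v ∈ e) → (E.filter fun e => v ∈ e).card = 2) (v : ℤ) :
    (E.filter fun e => v ∈ e).card ≤ 2 := by
  by_cases h : ∃ e ∈ E, v ∈ e
  · exact (hdeg v h).le
  · rw [Finset.filter_eq_empty_iff.2 fun e he hv => h ⟨e, he, hv⟩, Finset.card_empty]
    omega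

lemma sum_card_filter_mem_Vset (hface : ∀ e ∈ E, IsFace e) :
    ∑ v ∈ Vset, (E.filter fun e => v ∈ e).card = 2 * E.card := by
  have := Finset.sum_card_bipartiteAbove_eq_sum_card_bipartiteBelow (s := Vset) (t := E)
    (r := fun v e => v ∈ e)
  simp only [Finset.bipartiteAbove, Finset.bipartiteBelow] at this
  rw [this, Finset.sum_congr rfl fun e he => ?_, Finset.sum_const, smul_eq_mul, mul_comm]
  rw [Finset.filter_mem_eq_inter, Finset.inter_eq_right.2 (hface e he).subset_Vset_s11,
    (hface e he).card_eq_two_s11]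

lemma card_filter_mem_eq_two (hface : ∀ e ∈ E, IsFace e)
    (hdeg : ∀ v : ℤ, (∃ e ∈ E, v ∈ e) → (E.filter fun e => v ∈ e).card = 2)
    (hcard : E.card = 8) {v : ℤ} (hv : v ∈ Vset) :
    (E.filter fun e => v ∈ e).card = 2 := by
  have hsum : ∑ v ∈ Vset, (E.filter fun e => v ∈ e).card = ∑ _v ∈ Vset, 2 := by
    rw [sum_card_filter_mem_Vset hface, hcard, Finset.sum_const]; rfl
  exact (Finset.sum_eq_sum_iff_of_le fun v _ => card_filter_mem_le_two hdeg v).1 hsum v hv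

lemma card_filter_mem_planeOf_s11 (hface : ∀ e ∈ E, IsFace e)
    (hdeg : ∀ v : ℤ, (∃ e ∈ E, v ∈ e) → (E.filter fun e => v ∈ e).card = 2)
    (hcard : E.card = 8) {i : ℤ} (hi : 0 < i) (hiV : i ∈ Vset) (hiV' : -i ∈ Vset) :
    (E.filter fun e => i ∈ planeOf e).card = 4 := by
  have hdisj : Disjoint (E.filter fun e => i ∈ e) (E.filter fun e => -i ∈ e) :=
    Finset.disjoint_filter.2 fun e he h h' => (hface e he).neg_notMem_s11 hi.ne' h h'
  rw [Finset.filter_congr fun e _ => mem_planeOf_iff hi.le, Finset.filter_or,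
    Finset.card_union_of_disjoint hdisj, card_filter_mem_eq_two hface hdeg hcard hiV,
    card_filter_mem_eq_two hface hdeg hcard hiV']

lemma sum_planeCount_filter {S : Finset (Finset ℤ)} (hS : ∀ e ∈ E, planeOf e ∈ S)
    (p : Finset ℤ → Prop) [DecidablePred p] :
    ∑ P ∈ S.filter p, planeCount E P = (E.filter fun e => p (planeOf e)).card := by
  rw [Finset.card_eq_sum_card_fiberwise (f := planeOf) (t := S.filter p)
    fun e he => by simp_all]
  refine Finset.sum_congr rfl fun P hP => ?_
  rw [planeCount, Finset.filter_filter]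
  congr 1
  exact Finset.filter_congr fun e _ => ⟨fun h => ⟨h ▸ (Finset.mem_filter.1 hP).2, h⟩, And.right⟩

lemma planeCount_eq_zero_iff {P : Finset ℤ} : planeCount E P = 0 ↔ ∀ e ∈ E, planeOf e ≠ P := by
  simp [planeCount, Finset.filter_eq_empty_iff]

lemma signatureOf_eq_filter_map {S : Finset (Finset ℤ)} (hS : ∀ e ∈ E, planeOf e ∈ S) :
    signatureOf E = (S.val.map (planeCount E)).filter (· ≠ 0) := by
  have himage : E.image planeOf = S.filter fun P => planeCount E P ≠ 0 := by
    ext P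
    simp only [Finset.mem_image, Finset.mem_filter, Ne, planeCount_eq_zero_iff, not_forall,
      not_not]
    exact ⟨fun ⟨e, he, hP⟩ => ⟨hP ▸ hS e he, e, he, hP⟩, fun ⟨_, e, he, hP⟩ => ⟨e, he, hP⟩⟩
  rw [signatureOf, himage, Multiset.filter_map, Finset.filter_val]
  rfl

lemma planeOf_eq_of_reflTransGen {A B : Finset ℤ} (hAB : Disjoint A B)
    (hplanes : ∀ e ∈ E, planeOf e = A ∨ planeOf e = B) {e f : Finset ℤ} (he : planeOf e = A)
    (hef : Relation.ReflTransGen (fun a b => a ∈ E ∧ b ∈ E ∧ (a ∩ b).Nonempty) e f) :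
    planeOf f = A := by
  induction hef with
  | refl => exact he
  | tail _ hstep ih =>
    obtain ⟨-, hc, x, hx⟩ := hstep
    rw [Finset.mem_inter] at hx
    have hxA : |x| ∈ A := ih ▸ Finset.mem_image_of_mem _ hx.1
    refine (hplanes _ hc).resolve_right fun hB => Finset.disjoint_left.1 hAB hxA ?_
    exact hB ▸ Finset.mem_image_of_mem _ hx.2

lemma planeCount_opposite_eq (hface : ∀ e ∈ E, IsFace e)
    (hdeg : ∀ v : ℤ, (∃ e ∈ E, v ∈ e) → (E.filter fun e => v ∈ e).card = 2)
    (hcard : E.card = 8) :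
    planeCount E {3, 4} = planeCount E {1, 2} ∧ planeCount E {2, 4} = planeCount E {1, 3} ∧
      planeCount E {2, 3} = planeCount E {1, 4} ∧
      planeCount E {1, 2} + planeCount E {1, 3} + planeCount E {1, 4} = 4 := by
  have hS : ∀ e ∈ E, planeOf e ∈ sixPlanes := fun e he => (hface e he).planeOf_mem_sixPlanes
  have hsum (i : ℤ) (hi : 0 < i) (hiV : i ∈ Vset) (hiV' : -i ∈ Vset) :
      ∑ P ∈ sixPlanes.filter (i ∈ ·), planeCount E P = 4 :=
    (sum_planeCount_filter hS _).trans (card_filter_mem_planeOf_s11 hface hdeg hcard hi hiV hiV')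
  have h1 := hsum 1 one_pos (by decide) (by decide)
  have h2 := hsum 2 two_pos (by decide) (by decide)
  have h3 := hsum 3 three_pos (by decide) (by decide)
  have h4 := hsum 4 four_pos (by decide) (by decide)
  simp +decide [sixPlanes, Finset.filter_insert, Finset.filter_singleton,
    Finset.sum_insert] at h1 h2 h3 h4
  omega

lemma planeCount_eq_zero_or_of_disjoint {S : Finset (Finset ℤ)} (hS : ∀ e ∈ E, planeOf e ∈ S)
    (hconn : ∀ e ∈ E, ∀ f ∈ E,
      Relation.ReflTransGen (fun a b => a ∈ E ∧ b ∈ E ∧ (a ∩ b).Nonempty) e f)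
    {A B : Finset ℤ} (hAB : Disjoint A B) (hne : A ≠ B)
    (hzero : ∀ P ∈ S \ {A, B}, planeCount E P = 0) :
    planeCount E A = 0 ∨ planeCount E B = 0 := by
  simp only [planeCount_eq_zero_iff]
  by_contra! ⟨⟨e, he, heA⟩, ⟨f, hf, hfB⟩⟩
  have hplanes : ∀ e ∈ E, planeOf e = A ∨ planeOf e = B := fun e' he' => by
    by_contra! h
    exact planeCount_eq_zero_iff.1 (hzero _ (by simp [hS e' he', h.1, h.2])) e' he' rfl
  exact hne (hfB ▸ planeOf_eq_of_reflTransGen hAB hplanes heA (hconn e he f hf)).symm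

end Counting

lemma filter_ne_zero_eq_of_add_eq_four {a b c : ℕ} (h : a + b + c = 4)
    (hbc : b ≠ 0 ∨ c ≠ 0) (hac : a ≠ 0 ∨ c ≠ 0) (hab : a ≠ 0 ∨ b ≠ 0) :
    ({a, b, c, c, b, a} : Multiset ℕ).filter (· ≠ 0) = {3, 3, 1, 1} ∨
      ({a, b, c, c, b, a} : Multiset ℕ).filter (· ≠ 0) = {2, 2, 1, 1, 1, 1} ∨
      ({a, b, c, c, b, a} : Multiset ℕ).filter (· ≠ 0) = {2, 2, 2, 2} := by
  obtain rfl : c = 4 - a - b := by omega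
  have ha : a ≤ 4 := by omega
  have hb : b ≤ 4 - a := by omega
  interval_cases a <;> interval_cases b <;> simp_all <;> decide

theorem SquaredStar.signatureOf_of_card_eq_eight {E : Finset (Finset ℤ)} (hE : SquaredStar E)
    (hcard : E.card = 8) :
    signatureOf E = {3, 3, 1, 1} ∨ signatureOf E = {2, 2, 1, 1, 1, 1} ∨
      signatureOf E = {2, 2, 2, 2} := by
  obtain ⟨-, hface, hdeg, hconn⟩ := hE
  have hS : ∀ e ∈ E, planeOf e ∈ sixPlanes := fun e he => (hface e he).planeOf_mem_sixPlanes
  obtain ⟨h34, h24, h23, hsum⟩ := planeCount_opposite_eq hface hdeg hcard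
  have hsplit (A B : Finset ℤ) (hAB : Disjoint A B) (hne : A ≠ B)
      (hzero : ∀ P ∈ sixPlanes \ {A, B}, planeCount E P = 0) :
      planeCount E A = 0 ∨ planeCount E B = 0 :=
    planeCount_eq_zero_or_of_disjoint hS hconn hAB hne hzero
  have hsig : signatureOf E = ({planeCount E {1, 2}, planeCount E {1, 3}, planeCount E {1, 4},
      planeCount E {2, 3}, planeCount E {2, 4}, planeCount E {3, 4}} : Multiset ℕ).filter (· ≠ 0) :=
    signatureOf_eq_filter_map hS
  rw [hsig, h34, h24, h23]
  refine filter_ne_zero_eq_of_add_eq_four hsum ?_ ?_ ?_ <;> by_contra! h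
  · have := hsplit {1, 2} {3, 4} (by decide) (by decide) (by
      rw [show sixPlanes \ {{1, 2}, {3, 4}} = {{1, 3}, {1, 4}, {2, 3}, {2, 4}} by decide]
      simp [h, h23, h24])
    omega
  · have := hsplit {1, 3} {2, 4} (by decide) (by decide) (by
      rw [show sixPlanes \ {{1, 3}, {2, 4}} = {{1, 2}, {1, 4}, {2, 3}, {3, 4}} by decide]
      simp [h, h23, h34])
    omega
  · have := hsplit {1, 4} {2, 3} (by decide) (by decide) (by
      rw [show sixPlanes \ {{1, 4}, {2, 3}} = {{1, 2}, {1, 3}, {2, 4}, {3, 4}} by decide]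
      simp [h, h24, h34])
    omega

lemma List.IsChain.reflTransGen_of_mem {α : Type*} {r : α → α → Prop} [Std.Symm r]
    {l : List α} (hl : l.IsChain r) {a b : α} (ha : a ∈ l) (hb : b ∈ l) :
    Relation.ReflTransGen r a b := by
  have hne : l ≠ [] := List.ne_nil_of_mem ha
  have hhead : ∀ x ∈ l, Relation.ReflTransGen r (l.head hne) x :=
    hl.induction _ _ (fun _ _ hxy hx => hx.tail hxy) fun _ => .refl
  exact (Std.Symm.symm _ _ (hhead a ha)).trans (hhead b hb)

lemma SquaredStar.of_isChain {l : List (Finset ℤ)} (hcard : 3 ≤ l.toFinset.card)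
    (hface : ∀ e ∈ l, IsFace e)
    (hdeg : ∀ e ∈ l, ∀ v ∈ e, (l.toFinset.filter fun f => v ∈ f).card = 2)
    (hchain : l.IsChain fun a b => (a ∩ b).Nonempty) :
    SquaredStar l.toFinset := by
  refine ⟨hcard, fun e he => hface e (List.mem_toFinset.1 he),
    fun v ⟨e, he, hv⟩ => hdeg e (List.mem_toFinset.1 he) v hv, fun e he f hf => ?_⟩
  have : Std.Symm fun a b : Finset ℤ => a ∈ l.toFinset ∧ b ∈ l.toFinset ∧ (a ∩ b).Nonempty :=
    ⟨fun a b ⟨ha, hb, hab⟩ => ⟨hb, ha, Finset.inter_comm a b ▸ hab⟩⟩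
  refine (List.IsChain.iff_mem.1 hchain |>.imp ?_).reflTransGen_of_mem
    (List.mem_toFinset.1 he) (List.mem_toFinset.1 hf)
  exact fun a b ⟨ha, hb, hab⟩ => ⟨List.mem_toFinset.2 ha, List.mem_toFinset.2 hb, hab⟩

def cycle3311 : List (Finset ℤ) :=
  [{1, 2}, {2, -1}, {-1, -2}, {-2, 3}, {3, 4}, {4, -3}, {-3, -4}, {-4, 1}]

def cycle221111 : List (Finset ℤ) :=
  [{1, 2}, {2, -1}, {-1, 3}, {3, -2}, {-2, 4}, {4, -3}, {-3, -4}, {-4, 1}]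

def cycle2222 : List (Finset ℤ) :=
  [{1, 2}, {2, 3}, {3, 4}, {4, -1}, {-1, -2}, {-2, -3}, {-3, -4}, {-4, 1}]

/-- A squared-star with exactly 8 faces has signature `{3,3,1,1}`,
`{2,2,1,1,1,1}` or `{2,2,2,2}`, and each of these signatures is realized. -/
theorem signature_eight_faces :
    (∀ E : Finset (Finset ℤ), SquaredStar E → E.card = 8 →
      signatureOf E = {3, 3, 1, 1} ∨ signatureOf E = {2, 2, 1, 1, 1, 1} ∨
        signatureOf E = {2, 2, 2, 2}) ∧
    (∃ E : Finset (Finset ℤ), SquaredStar E ∧ E.card = 8 ∧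
      signatureOf E = {3, 3, 1, 1}) ∧
    (∃ E : Finset (Finset ℤ), SquaredStar E ∧ E.card = 8 ∧
      signatureOf E = {2, 2, 1, 1, 1, 1}) ∧
    (∃ E : Finset (Finset ℤ), SquaredStar E ∧ E.card = 8 ∧
      signatureOf E = {2, 2, 2, 2}) := by
  refine ⟨fun E hE hcard => hE.signatureOf_of_card_eq_eight hcard, ?_, ?_, ?_⟩
  · exact ⟨cycle3311.toFinset, .of_isChain (by decide) (by decide) (by decide) (by decide),
      by decide, by decide⟩
  · exact ⟨cycle221111.toFinset, .of_isChain (by decide) (by decide) (by decide) (by decide),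
      by decide, by decide⟩
  · exact ⟨cycle2222.toFinset, .of_isChain (by decide) (by decide) (by decide) (by decide),
      by decide, by decide⟩
end
end
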